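/- arXiv:2006.16847 — 6 statements merged into one kernel-verified Lean document; each statement's English description precedes it below -/
import Mathlib

section
/- A multivariate polynomial P(z_1,...,z_n) with real coefficients is stable (i.e., nonvanishing whenever all arguments have positive imaginary part) if and only if for all v ∈ ℝ^n and u ∈ ℝ^n with all coordinates positive, the univariate polynomial g(t) = P(v_1 + t·u_1, ..., v_n + t·u_n) has only real roots. -/
lemma key_eval (n : ℕ) (P : MvPolynomial (Fin n) ℝ) (v u : Fin n → ℝ) (w : ℂ) :
    Polynomial.aeval w
      (MvPolynomial.aeval
        (fun i => Polynomial.C (v i) + Polynomial.C (u i) * Polynomial.X) P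
        : Polynomial ℝ) =
    MvPolynomial.aeval (fun i => (v i : ℂ) + (u i : ℂ) * w) P := by
  rw [← AlgHom.comp_apply, MvPolynomial.comp_aeval]
  simp

lemma conj_aeval (p : Polynomial ℝ) (z : ℂ) :
    Polynomial.aeval ((starRingEnd ℂ) z) p = (starRingEnd ℂ) (Polynomial.aeval z p) := by
  have : ((starRingEnd ℂ) z) = Complex.conjAe.toAlgHom z := rfl
  rw [this, Polynomial.aeval_algHom_apply]
  rfl

/-- A real multivariate polynomial is stable iff all its restrictions to lines
with real base point and positive real direction are real-rooted. -/
theorem stmt_0 (n : ℕ) (P : MvPolynomial (Fin n) ℝ) :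
    (∀ z : Fin n → ℂ, (∀ i, 0 < (z i).im) → MvPolynomial.aeval z P ≠ 0) ↔
    (∀ v u : Fin n → ℝ, (∀ i, 0 < u i) →
      ∀ z : ℂ,
        Polynomial.aeval z
          (MvPolynomial.aeval
            (fun i => Polynomial.C (v i) + Polynomial.C (u i) * Polynomial.X) P
            : Polynomial ℝ) = 0 → z.im = 0) := by
  constructor
  · intro hP v u hu z hz
    by_contra him
    rcases Ne.lt_or_gt him with hlt | hgt
    · -- z.im < 0: use conjugate
      have hconj : Polynomial.aeval ((starRingEnd ℂ) z)
          (MvPolynomial.aeval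
            (fun i => Polynomial.C (v i) + Polynomial.C (u i) * Polynomial.X) P
            : Polynomial ℝ) = 0 := by
        rw [conj_aeval, hz, map_zero]
      rw [key_eval] at hconj
      exact hP _ (fun i => by
        simp only [Complex.add_im, Complex.ofReal_im, Complex.mul_im,
          Complex.ofReal_re, Complex.conj_im, zero_add, zero_mul, mul_zero, sub_zero, add_zero]
        have := mul_pos (hu i) (neg_pos.mpr hlt)
        nlinarith) hconj
    · rw [key_eval] at hz
      exact hP _ (fun i => by
        simp only [Complex.add_im, Complex.ofReal_im, Complex.mul_im,
          Complex.ofReal_re, zero_add, zero_mul, mul_zero, sub_zero, add_zero]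
        exact mul_pos (hu i) hgt) hz
  · intro h z hz hPz0
    have key := h (fun i => (z i).re) (fun i => (z i).im) (fun i => hz i) Complex.I ?_
    · simp at key
    · rw [key_eval]
      have : (fun i => ((z i).re : ℂ) + ((z i).im : ℂ) * Complex.I) = z :=
        funext fun i => Complex.re_add_im (z i)
      rw [this]; exact hPz0
end

section
/- If P(x_1,...,x_n) is a real stable polynomial, then its partial derivative ∂P/∂x_1 is real stable or identically zero. -/
/-!
Work over `ℂ`. Writing `p = ∑ₖ aₖ(x') x₀ᵏ`, the leading coefficient `a_d` is the limit of
`s ^ d p(s⁻¹, x')` as `s → 0` with `s⁻¹` in the upper half-plane; a Hurwitz-type argument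
(a polynomial without zeros in a disc has its values there comparable up to a factor `3 ^ degree`)
shows that `a_d` has no zeros on the upper half-space. Hence, for `x'` in the upper half-space,
`t ↦ p(t, x')` is a nonconstant polynomial without zeros in the upper half-plane, and by the
Gauss–Lucas theorem neither has its derivative `∂p/∂x₀ (t, x')`.
-/

open Polynomial Filter Topology Metric

namespace Polynomial

theorem norm_eval_le_three_pow_mul_norm_eval {f : ℂ[X]} {c : ℂ} {δ : ℝ}
    (hf : ∀ w ∈ ball c δ, f.eval w ≠ 0) {w₀ w₁ : ℂ} (h₀ : w₀ ∈ closedBall c (δ / 2))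
    (h₁ : w₁ ∈ closedBall c (δ / 2)) :
    ‖f.eval w₁‖ ≤ 3 ^ f.natDegree * ‖f.eval w₀‖ := by
  have hroots : ∀ r ∈ f.roots, δ ≤ dist r c := fun r hr =>
    not_lt.mp fun h => hf r (mem_ball.mpr h) (isRoot_of_mem_roots hr)
  have norm_eval (w : ℂ) : ‖f.eval w‖ = ‖f.leadingCoeff‖ * (f.roots.map (‖w - ·‖)).prod := by
    rw [(IsAlgClosed.splits f).eval_eq_prod_roots, norm_mul]
    congr 1
    simpa [Multiset.map_map] using
      map_multiset_prod (normHom.toMonoidHom : ℂ →* ℝ) (f.roots.map (w - ·))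
  -- `‖w₁ - r‖ ≤ dist r c + δ / 2 ≤ 3 (dist r c - δ / 2) ≤ 3 ‖w₀ - r‖` as `δ ≤ dist r c`
  have hfactor : ∀ r ∈ f.roots, ‖w₁ - r‖ ≤ 3 * ‖w₀ - r‖ := by
    intro r hr
    have := hroots r hr
    rw [mem_closedBall] at h₀ h₁
    have e₁ := dist_triangle w₁ c r
    have e₀ := dist_triangle r w₀ c
    rw [← dist_eq_norm, ← dist_eq_norm, dist_comm r w₀, dist_comm r c] at *
    linarith
  calc ‖f.eval w₁‖
      ≤ ‖f.leadingCoeff‖ * (f.roots.map (fun r => 3 * ‖w₀ - r‖)).prod := by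
        rw [norm_eval]
        gcongr
        exact Multiset.prod_map_le_prod_map₀ _ _ (fun _ _ => norm_nonneg _) hfactor
    _ = 3 ^ f.natDegree * ‖f.eval w₀‖ := by
        rw [Multiset.prod_map_mul, Multiset.map_const', Multiset.prod_replicate,
          IsAlgClosed.card_roots_eq_natDegree, norm_eval]
        ring

-- Hurwitz's theorem for polynomials of bounded degree.
theorem eq_zero_of_tendsto_eval {ι : Type*} {l : Filter ι} [l.NeBot] {f : ι → ℂ[X]} {g : ℂ[X]}
    {c : ℂ} {δ : ℝ} {N : ℕ} (hδ : 0 < δ) (hdeg : ∀ i, (f i).natDegree ≤ N)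
    (hf : ∀ᶠ i in l, ∀ w ∈ ball c δ, (f i).eval w ≠ 0)
    (hlim : ∀ w, Tendsto (fun i => (f i).eval w) l (𝓝 (g.eval w))) (hc : g.eval c = 0) :
    g = 0 := by
  have hc_mem : c ∈ closedBall c (δ / 2) := mem_closedBall_self (by positivity)
  have hvanish : ∀ w ∈ closedBall c (δ / 2), g.eval w = 0 := by
    intro w hw
    have hbound : ‖g.eval w‖ ≤ 3 ^ N * ‖g.eval c‖ :=
      le_of_tendsto_of_tendsto (hlim w).norm ((hlim c).norm.const_mul _) <| hf.mono fun i hi =>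
        (norm_eval_le_three_pow_mul_norm_eval hi hc_mem hw).trans <|
          mul_le_mul_of_nonneg_right (pow_le_pow_right₀ (by norm_num) (hdeg i)) (norm_nonneg _)
    simpa [hc] using hbound
  refine eq_zero_of_infinite_isRoot g (Set.Infinite.mono hvanish ?_)
  exact infinite_of_mem_nhds c (closedBall_mem_nhds c (by positivity))

theorem natDegree_eval_C_le {R : Type*} [Semiring R] (p : R[X][X]) (s : R) :
    (p.eval (C s)).natDegree ≤ p.support.sup fun k => (p.coeff k).natDegree := by
  rw [eval_eq_sum, sum_def]
  refine natDegree_sum_le_of_forall_le _ _ fun k hk => ?_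
  rw [← C_pow]
  exact (natDegree_mul_C_le _ _).trans (Finset.le_sup (f := fun k => (p.coeff k).natDegree) hk)

theorem evalEval_reflect_mul_pow {R : Type*} [CommSemiring R] (p : R[X][X]) (x y : R)
    [Invertible y] :
    (reflect p.natDegree p).evalEval x (⅟y) * y ^ p.natDegree = p.evalEval x y := by
  simpa only [eval₂_evalRingHom] using eval₂_reflect_mul_pow (evalRingHom x) y _ p le_rfl

theorem eval_leadingCoeff_ne_zero_of_evalEval_ne_zero {G : ℂ[X][X]} {c : ℂ}
    (hG : ∀ᶠ w in 𝓝 c, ∀ t : ℂ, 0 < t.im → G.evalEval w t ≠ 0) :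
    G.leadingCoeff.eval c ≠ 0 := by
  obtain ⟨δ, hδ, hball⟩ := eventually_nhds_iff_ball.mp hG
  have hG₀ : G ≠ 0 := by
    rintro rfl
    exact hball c (mem_ball_self hδ) Complex.I (by simp) (evalEval_zero c _)
  -- `R(w, s) = s ^ d G(w, s⁻¹)`, which tends to the leading coefficient as `s → 0`;
  -- along `s = -r i`, `r → 0⁺`, the point `s⁻¹ = i / r` stays in the upper half-plane.
  set R := reflect G.natDegree G
  have hR_ne_zero : ∀ᶠ r : ℝ in 𝓝[>] 0, ∀ w ∈ ball c δ,
      (R.eval (C (-(↑r * Complex.I)))).eval w ≠ 0 := by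
    filter_upwards [self_mem_nhdsWithin] with r (hr : 0 < r) w hw
    have hs : -(↑r * Complex.I) ≠ 0 := by simp [hr.ne']
    let _ : Invertible (-(↑r * Complex.I))⁻¹ := invertibleOfNonzero (inv_ne_zero hs)
    have key := evalEval_reflect_mul_pow G w (-(↑r * Complex.I))⁻¹
    rw [invOf_eq_inv, inv_inv] at key
    refine left_ne_zero_of_mul (key ▸ hball w hw _ ?_)
    simp [Complex.inv_im]
    positivity
  have hR_tendsto (w : ℂ) : Tendsto (fun r : ℝ => (R.eval (C (-(↑r * Complex.I)))).eval w)
      (𝓝[>] 0) (𝓝 (G.leadingCoeff.eval w)) := by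
    have hcont : Continuous fun r : ℝ => R.evalEval w (-(↑r * Complex.I)) := by
      simp only [← map_evalRingHom_eval]
      fun_prop
    convert (hcont.tendsto 0).mono_left nhdsWithin_le_nhds using 2
    simp [R, evalEval, ← coeff_zero_eq_eval_zero, coeff_reflect]
  exact fun hc => hG₀ <| leadingCoeff_eq_zero.mp <|
    eq_zero_of_tendsto_eval hδ (fun r => natDegree_eval_C_le R _) hR_ne_zero hR_tendsto hc

theorem eval_derivative_ne_zero_of_im_pos {q : ℂ[X]} (hq_deg : 0 < q.degree)
    (hq : ∀ t : ℂ, 0 < t.im → q.eval t ≠ 0) {t : ℂ} (ht : 0 < t.im) :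
    q.derivative.eval t ≠ 0 := by
  intro h
  have hq' : q.derivative ≠ 0 := fun h' =>
    (natDegree_pos_iff_degree_pos.mpr hq_deg).ne' (derivative_eq_zero.mp h')
  have hroots : q.rootSet ℂ ⊆ {w : ℂ | w.im ≤ 0} := fun w hw =>
    not_lt.mp fun hw' => hq w hw' (by simpa using (mem_rootSet.mp hw).2)
  have hconvex : Convex ℝ {w : ℂ | w.im ≤ 0} :=
    convex_halfSpace_le Complex.imLm.isLinear 0
  have := (hconvex.convexHull_subset_iff.mpr hroots)
    (rootSet_derivative_subset_convexHull_rootSet hq_deg (mem_rootSet.mpr ⟨hq', by simpa using h⟩))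
  exact not_lt.mpr this ht

end Polynomial

namespace MvPolynomial

theorem finSuccEquiv_pderiv_zero {R : Type*} [CommSemiring R] {n : ℕ}
    (p : MvPolynomial (Fin (n + 1)) R) :
    finSuccEquiv R n (pderiv 0 p) = derivative (finSuccEquiv R n p) := by
  induction p using MvPolynomial.induction_on with
  | C a => simp [finSuccEquiv_apply]
  | add p q hp hq => simp [hp, hq]
  | mul_X p i hp =>
    have hX : finSuccEquiv R n (pderiv 0 (X i)) = derivative (finSuccEquiv R n (X i)) := by
      cases i using Fin.cases with
      | zero => simp [finSuccEquiv_X_zero]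
      | succ j => simp [finSuccEquiv_X_succ]
    rw [pderiv_mul, map_add, map_mul, map_mul, hp, hX, map_mul, derivative_mul]

def IsStable {σ : Type*} (p : MvPolynomial σ ℂ) : Prop :=
  ∀ z : σ → ℂ, (∀ i, 0 < (z i).im) → eval z p ≠ 0

theorem IsStable.ne_zero {σ : Type*} {p : MvPolynomial σ ℂ} (hp : p.IsStable) : p ≠ 0 := by
  rintro rfl
  exact hp (fun _ => Complex.I) (by simp) (map_zero _)

theorem IsStable.eval_leadingCoeff_finSuccEquiv_ne_zero {n : ℕ}
    {p : MvPolynomial (Fin (n + 1)) ℂ} (hp : p.IsStable) {z : Fin n → ℂ}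
    (hz : ∀ i, 0 < (z i).im) : eval z (finSuccEquiv ℂ n p).leadingCoeff ≠ 0 := by
  set Q := finSuccEquiv ℂ n p
  have hQ : Q.leadingCoeff ≠ 0 :=
    leadingCoeff_ne_zero.mpr ((map_ne_zero_iff _ (finSuccEquiv ℂ n).injective).mpr hp.ne_zero)
  obtain ⟨y, hy⟩ : ∃ y, eval y Q.leadingCoeff ≠ 0 := by
    by_contra! h
    exact hQ (MvPolynomial.funext (by simpa using h))
  -- on the line `w ↦ z + w (y - z)` the leading coefficient is nonzero, as it is at `w = 1`
  let line : Fin n → ℂ[X] := fun j => Polynomial.C (z j) + Polynomial.C (y j - z j) * Polynomial.X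
  have eval_line (w : ℂ) (c : MvPolynomial (Fin n) ℂ) :
      (aeval line c).eval w = eval (fun j => z j + (y j - z j) * w) c := by
    rw [← Polynomial.coe_aeval_eq_eval, comp_aeval_apply]
    simp [line]
  let G : ℂ[X][X] := Q.map (aeval line).toRingHom
  have hG_lc : G.leadingCoeff = aeval line Q.leadingCoeff := by
    refine leadingCoeff_map_of_leadingCoeff_ne_zero _ fun h => hy ?_
    simpa [eval_line] using congrArg (Polynomial.eval 1) h
  have hG_eval (w t : ℂ) :
      G.evalEval w t = eval (Fin.cons t fun j => z j + (y j - z j) * w) p := by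
    rw [← map_evalRingHom_eval, Polynomial.map_map, eval_eq_eval_mv_eval']
    congr 2
    exact RingHom.ext fun c => eval_line w c
  have hline : ∀ᶠ w in 𝓝 (0 : ℂ), ∀ j, 0 < (z j + (y j - z j) * w).im :=
    eventually_all.mpr fun j => Tendsto.eventually_const_lt (by simpa using hz j)
      ((by fun_prop : Continuous fun w : ℂ => (z j + (y j - z j) * w).im).tendsto' 0 _ (by simp))
  have := eval_leadingCoeff_ne_zero_of_evalEval_ne_zero <| hline.mono fun w hw t ht => by
    rw [hG_eval]
    exact hp _ (Fin.cases ht hw)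
  simpa [hG_lc, eval_line] using this

theorem IsStable.pderiv_zero_eq_zero_or_isStable {n : ℕ} {p : MvPolynomial (Fin (n + 1)) ℂ}
    (hp : p.IsStable) : pderiv 0 p = 0 ∨ (pderiv 0 p).IsStable := by
  refine or_iff_not_imp_left.mpr fun hp' z hz => ?_
  set Q := finSuccEquiv ℂ n p
  let q : ℂ[X] := Q.map (eval (Fin.tail z))
  have hq_eval (t : ℂ) : q.eval t = eval (Fin.cons t (Fin.tail z)) p :=
    (eval_eq_eval_mv_eval' _ _ _).symm
  have hQ_deg : Q.natDegree ≠ 0 := fun h => hp' <|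
    (map_eq_zero_iff _ (finSuccEquiv ℂ n).injective).mp <| by
      rw [finSuccEquiv_pderiv_zero, derivative_eq_zero.mpr h]
  have hq_deg : 0 < q.degree := by
    rw [← natDegree_pos_iff_degree_pos, natDegree_map_of_leadingCoeff_ne_zero _
      (hp.eval_leadingCoeff_finSuccEquiv_ne_zero (z := Fin.tail z) fun j => hz j.succ)]
    exact Nat.pos_of_ne_zero hQ_deg
  have := eval_derivative_ne_zero_of_im_pos hq_deg
    (fun t ht => hq_eval t ▸ hp _ (Fin.cases ht fun j => hz j.succ)) (hz 0)
  rwa [derivative_map, ← finSuccEquiv_pderiv_zero, ← eval_eq_eval_mv_eval',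
    Fin.cons_self_tail] at this

end MvPolynomial

/-- The partial derivative of a real stable polynomial is real stable or zero. -/
theorem stmt_2 (n : ℕ) (P : MvPolynomial (Fin (n + 1)) ℝ)
    (hP : ∀ z : Fin (n + 1) → ℂ, (∀ i, 0 < (z i).im) → MvPolynomial.aeval z P ≠ 0) :
    MvPolynomial.pderiv 0 P = 0 ∨
    (∀ z : Fin (n + 1) → ℂ, (∀ i, 0 < (z i).im) →
      MvPolynomial.aeval z (MvPolynomial.pderiv 0 P) ≠ 0) := by
  have eval_map_eq_aeval (p : MvPolynomial (Fin (n + 1)) ℝ) (z : Fin (n + 1) → ℂ) :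
      MvPolynomial.eval z (MvPolynomial.map (algebraMap ℝ ℂ) p) = MvPolynomial.aeval z p := by
    rw [MvPolynomial.eval_map, MvPolynomial.aeval_def]
  have hP_stable : (MvPolynomial.map (algebraMap ℝ ℂ) P).IsStable := fun z hz =>
    eval_map_eq_aeval P z ▸ hP z hz
  rcases hP_stable.pderiv_zero_eq_zero_or_isStable with h | h <;> rw [MvPolynomial.pderiv_map] at h
  · exact Or.inl <| MvPolynomial.map_injective _ (algebraMap ℝ ℂ).injective (by simpa using h)
  · exact Or.inr fun z hz => eval_map_eq_aeval _ z ▸ h z hz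
end

section
/- If a sequence of real-rooted univariate real polynomials converges coefficientwise to a polynomial P, then P is real-rooted (or constant). -/
/-!
For a real-rooted `Q`, `‖Q (x + y i)‖` is nondecreasing in `|y|`, so a pointwise limit of
real-rooted polynomials that vanishes at a non-real `z₀` vanishes on a whole vertical segment
through `z₀`, hence identically. Coefficientwise convergence alone does not give pointwise
convergence (the degrees may be unbounded), but it does after Graeffe's transform:
`graeffe Q = a² ∏ (X + r²)` has nonnegative, log-concave coefficients without internal zeros, so
beyond the degree `N` of the limit they decay geometrically at a rate governed by the
`(N + 1)`-st one, which tends to `0`. Hence `Q z * Q (-z) = graeffe Q (-z²)` converges pointwise,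
and the monotonicity argument applies to `Q * Q.comp (-X)`.
-/

open Filter Topology Finset

namespace Polynomial

section Graeffe

variable {R : Type*} [CommRing R]

theorem coeff_comp_neg_X (p : R[X]) (n : ℕ) : (p.comp (-X)).coeff n = (-1) ^ n * p.coeff n := by
  rw [← neg_one_mul (X : R[X]), ← C_1, ← C_neg, comp_C_mul_X_coeff, mul_comm]

theorem expand_contract_two_of_comp_neg_X_eq_self [IsAddTorsionFree R] {f : R[X]}
    (hf : f.comp (-X) = f) : expand R 2 (contract 2 f) = f := by
  ext n
  rw [coeff_expand two_pos, coeff_contract two_ne_zero]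
  split_ifs with h
  · rw [Nat.div_mul_cancel h]
  · have hn := congrArg (coeff · n) hf
    simp only [coeff_comp_neg_X, (Nat.odd_iff.2 (Nat.two_dvd_ne_zero.1 h)).neg_one_pow,
      neg_one_mul, neg_eq_self] at hn
    exact hn.symm

theorem mul_comp_neg_X_comp_neg_X (p : R[X]) : (p * p.comp (-X)).comp (-X) = p * p.comp (-X) := by
  rw [mul_comp, comp_neg_X_comp_neg_X, mul_comm]

/-- Graeffe's root-squaring transform, normalised so that `graeffe p (-z ^ 2) = p z * p (-z)`. -/
noncomputable def graeffe (p : R[X]) : R[X] := (contract 2 (p * p.comp (-X))).comp (-X)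

theorem aeval_neg_sq_graeffe [IsAddTorsionFree R] {A : Type*} [CommRing A] [Algebra R A]
    (p : R[X]) (z : A) : aeval (-z ^ 2) (graeffe p) = aeval z p * aeval (-z) p := by
  rw [graeffe, aeval_comp, map_neg, aeval_X, neg_neg, ← expand_aeval,
    expand_contract_two_of_comp_neg_X_eq_self (mul_comp_neg_X_comp_neg_X p), map_mul, aeval_comp,
    map_neg, aeval_X]

theorem graeffe_eq_zero_iff [IsDomain R] [IsAddTorsionFree R] {p : R[X]} :
    graeffe p = 0 ↔ p = 0 := by
  refine ⟨fun h => ?_, fun h => by simp [graeffe, h, contract]⟩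
  rw [graeffe, comp_neg_X_eq_zero_iff] at h
  have := expand_contract_two_of_comp_neg_X_eq_self (mul_comp_neg_X_comp_neg_X p)
  rw [h, map_zero, eq_comm, mul_eq_zero, comp_neg_X_eq_zero_iff, or_self] at this
  exact this

theorem graeffe_C_mul_prod_X_sub_C (a : R) (s : Multiset R) :
    graeffe (C a * (s.map (X - C ·)).prod) = C (a ^ 2) * (s.map fun r => X + C (r ^ 2)).prod := by
  have heven : C a * (s.map (X - C ·)).prod * (C a * (s.map (X - C ·)).prod).comp (-X)
      = expand R 2 (C (a ^ 2) * (s.map fun r => C (r ^ 2) - X).prod) := by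
    simp only [mul_comp, C_comp, multiset_prod_comp, Multiset.map_map, Function.comp_def, sub_comp,
      X_comp, map_mul, expand_C, map_multiset_prod, map_sub, expand_X, map_pow]
    rw [mul_mul_mul_comm, ← Multiset.prod_map_mul, sq]
    congr 2
    exact Multiset.map_congr rfl fun r _ => by ring
  rw [graeffe, heven, contract_expand (p := 2) two_ne_zero, mul_comp, C_comp, multiset_prod_comp,
    Multiset.map_map]
  congr 2
  exact Multiset.map_congr rfl fun r _ => by simp [sub_comp]; ring

end Graeffe

section TendstoCoeff

variable {R ι : Type*} [CommRing R] [TopologicalSpace R] {l : Filter ι}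
  {p p' : ι → R[X]} {q q' : R[X]}

theorem tendsto_coeff_mul [IsTopologicalRing R]
    (hp : ∀ k, Tendsto (fun i => (p i).coeff k) l (𝓝 (q.coeff k)))
    (hp' : ∀ k, Tendsto (fun i => (p' i).coeff k) l (𝓝 (q'.coeff k))) (k : ℕ) :
    Tendsto (fun i => (p i * p' i).coeff k) l (𝓝 ((q * q').coeff k)) := by
  simp only [coeff_mul]
  exact tendsto_finsetSum _ fun x _ => (hp x.1).mul (hp' x.2)

theorem tendsto_coeff_comp_neg_X [IsTopologicalRing R]
    (hp : ∀ k, Tendsto (fun i => (p i).coeff k) l (𝓝 (q.coeff k))) (k : ℕ) :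
    Tendsto (fun i => ((p i).comp (-X)).coeff k) l (𝓝 ((q.comp (-X)).coeff k)) := by
  simp only [coeff_comp_neg_X]
  exact (hp k).const_mul _

theorem tendsto_coeff_contract {n : ℕ} (hn : n ≠ 0)
    (hp : ∀ k, Tendsto (fun i => (p i).coeff k) l (𝓝 (q.coeff k))) (k : ℕ) :
    Tendsto (fun i => (contract n (p i)).coeff k) l (𝓝 ((contract n q).coeff k)) := by
  simp only [coeff_contract hn]
  exact hp _

theorem tendsto_coeff_graeffe [IsTopologicalRing R]
    (hp : ∀ k, Tendsto (fun i => (p i).coeff k) l (𝓝 (q.coeff k))) :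
    ∀ k, Tendsto (fun i => (graeffe (p i)).coeff k) l (𝓝 ((graeffe q).coeff k)) :=
  tendsto_coeff_comp_neg_X <| tendsto_coeff_contract two_ne_zero <|
    tendsto_coeff_mul hp (tendsto_coeff_comp_neg_X hp)

end TendstoCoeff

/-- Pólya frequency of order two: `b ≥ 0` and `b (k + 1) / b k` is antitone (cross-multiplied, so
that zeros are allowed); equivalently, `b` is log-concave without internal zeros. -/
def IsPF2 (b : ℕ → ℝ) : Prop :=
  (∀ k, 0 ≤ b k) ∧ ∀ ⦃i j : ℕ⦄, i ≤ j → b i * b (j + 1) ≤ b (i + 1) * b j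

theorem isPF2_coeff_C {a : ℝ} (ha : 0 ≤ a) : IsPF2 (C a).coeff := by
  refine ⟨fun k => ?_, fun i j _ => ?_⟩
  · rw [coeff_C]; split_ifs <;> simp [ha]
  · simp [coeff_C]

theorem IsPF2.mul_X_add_C {p : ℝ[X]} (hp : IsPF2 p.coeff) {s : ℝ} (hs : 0 ≤ s) :
    IsPF2 (p * (X + C s)).coeff := by
  obtain ⟨h0, hr⟩ := hp
  have hc0 : (p * (X + C s)).coeff 0 = s * p.coeff 0 := by
    rw [mul_add, coeff_add, coeff_mul_X_zero, coeff_mul_C, zero_add, mul_comm]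
  have hc : ∀ k, (p * (X + C s)).coeff (k + 1) = p.coeff k + s * p.coeff (k + 1) := fun k => by
    rw [mul_add, coeff_add, coeff_mul_X, coeff_mul_C, mul_comm]
  refine ⟨fun k => ?_, fun i j hij => ?_⟩
  · cases k with
    | zero => rw [hc0]; exact mul_nonneg hs (h0 0)
    | succ k => rw [hc]; exact add_nonneg (h0 k) (mul_nonneg hs (h0 _))
  obtain rfl | hij := hij.eq_or_lt
  · exact (mul_comm _ _).le
  obtain ⟨j, rfl⟩ := Nat.exists_eq_add_of_lt hij
  cases i with
  | zero =>
    simp only [zero_add]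
    rw [hc0, hc, hc, hc]
    have h1 := mul_nonneg (h0 0) (h0 j)
    have h2 := mul_nonneg hs (mul_nonneg (h0 1) (h0 j))
    linear_combination h1 + h2 + s ^ 2 * hr (Nat.zero_le (j + 1))
  | succ i =>
    rw [hc, hc, hc, hc]
    have h1 := hr (show i ≤ i + 1 + j by omega)
    have h2 := (hr (show i ≤ i + 1 + j + 1 by omega)).trans
      (hr (show i + 1 ≤ i + 1 + j by omega))
    have h3 := hr (show i + 1 ≤ i + 1 + j + 1 by omega)
    linear_combination h1 + s * h2 + s ^ 2 * h3

theorem isPF2_coeff_C_mul_prod_X_add_C {α : Type*} {a : ℝ} (ha : 0 ≤ a) {s : Multiset α}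
    {f : α → ℝ} (hs : ∀ x ∈ s, 0 ≤ f x) :
    IsPF2 (C a * (s.map fun x => X + C (f x)).prod).coeff := by
  induction s using Multiset.induction with
  | empty => simpa using isPF2_coeff_C ha
  | cons x s ih =>
    rw [Multiset.map_cons, Multiset.prod_cons, mul_left_comm, mul_comm]
    exact (ih fun y hy => hs y (Multiset.mem_cons_of_mem hy)).mul_X_add_C
      (hs x (Multiset.mem_cons_self x s))

theorem IsPF2.sum_Ico_mul_pow_le {b : ℕ → ℝ} (hb : IsPF2 b) {N : ℕ} {r : ℝ} (hr : 0 ≤ r)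
    (hN : 2 * r * b (N + 1) < b N) (M : ℕ) :
    ∑ k ∈ Ico (N + 1) M, b k * r ^ k ≤ 2 * (b (N + 1) * r ^ (N + 1)) := by
  obtain ⟨h0, hratio⟩ := hb
  have hbN : 0 < b N := (mul_nonneg (mul_nonneg zero_le_two hr) (h0 _)).trans_lt hN
  -- beyond `N` the ratio `b (k + 1) / b k` is at most `b (N + 1) / b N < 1 / (2 * r)`
  have hstep : ∀ k, N ≤ k → 2 * r * b (k + 1) ≤ b k := fun k hk =>
    le_of_mul_le_mul_left (by nlinarith [hratio hk, h0 k, h0 (k + 1)]) hbN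
  have hgeom (j : ℕ) :
      b (N + 1 + j) * r ^ (N + 1 + j) ≤ b (N + 1) * r ^ (N + 1) * (1 / 2) ^ j := by
    induction j with
    | zero => simp
    | succ j ih =>
      have := mul_le_mul_of_nonneg_right (hstep (N + 1 + j) (by omega))
        (pow_nonneg hr (N + 1 + j))
      calc b (N + 1 + (j + 1)) * r ^ (N + 1 + (j + 1))
          = 2 * r * b (N + 1 + j + 1) * r ^ (N + 1 + j) / 2 := by ring_nf
        _ ≤ b (N + 1) * r ^ (N + 1) * (1 / 2) ^ (j + 1) := by
          rw [pow_succ (1 / 2 : ℝ)]; linarith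
  calc ∑ k ∈ Ico (N + 1) M, b k * r ^ k
      = ∑ j ∈ range (M - (N + 1)), b (N + 1 + j) * r ^ (N + 1 + j) :=
        sum_Ico_eq_sum_range _ _ _
    _ ≤ ∑ j ∈ range (M - (N + 1)), b (N + 1) * r ^ (N + 1) * (1 / 2) ^ j :=
        sum_le_sum fun j _ => hgeom j
    _ ≤ b (N + 1) * r ^ (N + 1) * 2 := by
      rw [← mul_sum]
      exact mul_le_mul_of_nonneg_left (sum_geometric_two_le _)
        (mul_nonneg (h0 _) (pow_nonneg hr _))
    _ = 2 * (b (N + 1) * r ^ (N + 1)) := mul_comm _ _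

theorem norm_aeval_sub_sum_range_le {p : ℝ[X]} (hp : IsPF2 p.coeff) {N : ℕ} {z : ℂ}
    (hN : 2 * ‖z‖ * p.coeff (N + 1) < p.coeff N) :
    ‖aeval z p - ∑ k ∈ range (N + 1), p.coeff k • z ^ k‖
      ≤ 2 * (p.coeff (N + 1) * ‖z‖ ^ (N + 1)) := by
  set M := max (p.natDegree + 1) (N + 1)
  rw [aeval_eq_sum_range' (n := M) (by omega), ← sum_range_add_sum_Ico _ (le_max_right _ _),
    add_sub_cancel_left]
  refine (norm_sum_le _ _).trans (le_trans (le_of_eq (sum_congr rfl fun k _ => ?_))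
    (hp.sum_Ico_mul_pow_le (norm_nonneg z) hN M))
  rw [norm_smul, norm_pow, Real.norm_of_nonneg (hp.1 k)]

theorem tendsto_aeval_of_tendsto_coeff {ι : Type*} {l : Filter ι} [l.NeBot] {F : ι → ℝ[X]}
    {L : ℝ[X]} (hF : ∀ i, IsPF2 (F i).coeff) (hL : L ≠ 0)
    (hlim : ∀ k, Tendsto (fun i => (F i).coeff k) l (𝓝 (L.coeff k))) (z : ℂ) :
    Tendsto (fun i => aeval z (F i)) l (𝓝 (aeval z L)) := by
  set N := L.natDegree
  have hhead :
      Tendsto (fun i => ∑ k ∈ range (N + 1), (F i).coeff k • z ^ k) l (𝓝 (aeval z L)) := by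
    rw [aeval_eq_sum_range]
    exact tendsto_finsetSum _ fun k _ => (hlim k).smul_const _
  have hlead : 0 < L.coeff N :=
    (ge_of_tendsto' (hlim N) fun i => (hF i).1 N).lt_of_ne' (leadingCoeff_ne_zero.2 hL)
  have hnext : Tendsto (fun i => (F i).coeff (N + 1)) l (𝓝 0) := by
    simpa [coeff_eq_zero_of_natDegree_lt (Nat.lt_succ_self N)] using hlim (N + 1)
  have hbound : Tendsto (fun i => 2 * ((F i).coeff (N + 1) * ‖z‖ ^ (N + 1))) l (𝓝 0) := by
    simpa using (hnext.mul_const _).const_mul 2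
  have hev : ∀ᶠ i in l, 2 * ‖z‖ * (F i).coeff (N + 1) < (F i).coeff N := by
    refine Tendsto.eventually_lt ?_ (hlim N) hlead
    simpa using hnext.const_mul (2 * ‖z‖)
  have htail :=
    squeeze_zero_norm' (hev.mono fun i hi => norm_aeval_sub_sum_range_le (hF i) hi) hbound
  simpa using htail.add hhead

theorem splits_of_forall_aeval_eq_zero_im_eq_zero {p : ℝ[X]}
    (hp : ∀ z : ℂ, aeval z p = 0 → z.im = 0) : p.Splits :=
  Splits.of_splits_map (algebraMap ℝ ℂ) (IsAlgClosed.splits _) fun z hz =>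
    ⟨z.re, Complex.ext (by simp) (by simp [hp z (mem_aroots.1 hz).2])⟩

theorem Splits.norm_aeval_le_of_re_eq {p : ℝ[X]} (hp : p.Splits) {z w : ℂ} (hre : z.re = w.re)
    (him : |z.im| ≤ |w.im|) : ‖aeval z p‖ ≤ ‖aeval w p‖ := by
  have hfactor : ∀ r : ℝ, ‖z - r‖ ≤ ‖w - r‖ := fun r => by
    rw [← sq_le_sq₀ (norm_nonneg _) (norm_nonneg _), Complex.sq_norm, Complex.sq_norm,
      Complex.normSq_apply, Complex.normSq_apply]
    simp only [Complex.sub_re, Complex.sub_im, Complex.ofReal_re, Complex.ofReal_im, sub_zero, hre]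
    nlinarith [sq_le_sq.2 him]
  rw [hp.eq_prod_roots]
  simp only [map_mul, aeval_C, map_multiset_prod, Multiset.map_map, Function.comp_def, map_sub,
    aeval_X, norm_mul, Complex.coe_algebraMap]
  have hnorm : ∀ u : ℂ, ‖(p.roots.map fun r : ℝ => u - r).prod‖
      = (p.roots.map fun r : ℝ => ‖u - r‖).prod := fun u => by
    simpa [Multiset.map_map] using
      map_multiset_prod (normHom : ℂ →*₀ ℝ) (p.roots.map fun r : ℝ => u - r)
  rw [hnorm, hnorm]
  gcongr
  exact Multiset.prod_map_le_prod_map₀ _ _ (fun _ _ => norm_nonneg _) fun r _ => hfactor r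

theorem eq_zero_of_tendsto_aeval_of_splits {ι : Type*} {l : Filter ι} [l.NeBot]
    {q : ι → ℝ[X]} {p : ℝ[X]} (hq : ∀ i, (q i).Splits)
    (hlim : ∀ z : ℂ, Tendsto (fun i => aeval z (q i)) l (𝓝 (aeval z p))) {z₀ : ℂ}
    (hz₀ : aeval z₀ p = 0) (him : z₀.im ≠ 0) : p = 0 := by
  have hroot : ∀ t ∈ Set.Icc (-|z₀.im|) |z₀.im|, aeval (⟨z₀.re, t⟩ : ℂ) p = 0 := by
    intro t ht
    have := le_of_tendsto_of_tendsto' (hlim _).norm (hlim z₀).norm fun i =>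
      (hq i).norm_aeval_le_of_re_eq (z := ⟨z₀.re, t⟩) rfl (abs_le.2 ht)
    simpa [hz₀] using this
  have hinf :
      ((fun t : ℝ => (⟨z₀.re, t⟩ : ℂ)) '' Set.Icc (-|z₀.im|) |z₀.im|).Infinite :=
    (Set.Icc_infinite (neg_lt_self (abs_pos.2 him))).image fun _ _ _ _ h => congrArg Complex.im h
  rw [← Polynomial.map_eq_zero (algebraMap ℝ ℂ)]
  refine eq_zero_of_infinite_isRoot _ (hinf.mono ?_)
  rintro _ ⟨t, ht, rfl⟩
  simpa [eval_map_algebraMap] using hroot t ht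

end Polynomial

open Polynomial

/-- A coefficientwise limit of real-rooted real polynomials is
real-rooted or constant. -/
theorem stmt_4 (P : Polynomial ℝ) (Q : ℕ → Polynomial ℝ)
    (hroots : ∀ m, ∀ z : ℂ, Polynomial.aeval z (Q m) = 0 → z.im = 0)
    (hconv : ∀ k, Filter.Tendsto (fun m => (Q m).coeff k) Filter.atTop
      (nhds (P.coeff k))) :
    P.natDegree = 0 ∨ ∀ z : ℂ, Polynomial.aeval z P = 0 → z.im = 0 := by
  refine or_iff_not_imp_right.2 fun hP => ?_
  obtain ⟨z₀, hz₀, him⟩ : ∃ z₀ : ℂ, aeval z₀ P = 0 ∧ z₀.im ≠ 0 := by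
    simpa using hP
  suffices P = 0 by simp [this]
  have hsplit m : (Q m).Splits := splits_of_forall_aeval_eq_zero_im_eq_zero (hroots m)
  rcases eq_or_ne (graeffe P) 0 with hG | hG
  · exact graeffe_eq_zero_iff.1 hG
  have hPF2 m : IsPF2 (graeffe (Q m)).coeff := by
    rw [(hsplit m).eq_prod_roots, graeffe_C_mul_prod_X_sub_C]
    exact isPF2_coeff_C_mul_prod_X_add_C (sq_nonneg _) fun r _ => sq_nonneg r
  have hlim (z : ℂ) : Tendsto (fun m => aeval z (Q m * (Q m).comp (-X))) atTop
      (𝓝 (aeval z (P * P.comp (-X)))) := by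
    simpa [aeval_comp, ← aeval_neg_sq_graeffe] using
      tendsto_aeval_of_tendsto_coeff hPF2 hG (tendsto_coeff_graeffe hconv) (-z ^ 2)
  have hPP := eq_zero_of_tendsto_aeval_of_splits (fun m => (hsplit m).mul (hsplit m).comp_neg_X)
    hlim (by simp [hz₀]) him
  simpa using hPP
end

section
/- For integers 0 < r < d, the function f_{d,r}(x_1,...,x_d) = Σ_{K ⊆ [d], |K| = r} Π_{j∈K} x_j · Π_{j∉K} (1 - x_j), restricted to the domain D_{d,r} = { x ∈ [0,1]^d : Σ_i x_i = r }, attains its minimum at the point (r/d, ..., r/d), and this minimum equals C(d,r) · (r/d)^r · ((d-r)/d)^{d-r}. -/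
/-!
Let `y` minimise `f_{d,r}` on `D_{d,r}` and, among all minimisers, minimise `∑ yᵢ²`. The
generating polynomial `∏ₖ (1 - xₖ + xₖ X)` has `f_{d,r}` as its coefficient of `X^r`; since
`(1 - u + uX)(1 - v + vX) = (1 - s + sX) + uv (1 - X)²` with `s = u + v`, moving two coordinates
along `u + v = s` changes `f_{d,r}` affinely in `uv`. If two coordinates of `y` lie in `(0,1)`
and differ, both directions of motion are admissible, so the slope vanishes and averaging the two
coordinates keeps `f_{d,r}` while lowering `∑ yᵢ²`. Hence `y` has `a` coordinates `1`, some `0`,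
and `m` equal to `t = k/m` with `k = r - a`, so `f_{d,r}(y) = P(Bin(m, k/m) = k)`, where
`k ≤ r` and `m - k ≤ d - r`. Finally `P(Bin(k + n, k/(k + n)) = k)` decreases in `n`, because
`(1 + 1/n)ⁿ` increases, and it is symmetric in `k` and `n`.
-/

open Finset Polynomial Function

@[to_additive]
theorem prod_comp_update_update {ι R M : Type*} [Fintype ι] [DecidableEq ι] [CommMonoid M]
    (g : R → M) (y : ι → R) {i j : ι} (hij : i ≠ j) (u v : R) :
    ∏ l, g (update (update y i u) j v l) = g u * g v * ∏ l ∈ (univ.erase i).erase j, g (y l) := by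
  rw [← mul_prod_erase univ _ (mem_univ i),
    ← mul_prod_erase _ _ (mem_erase.2 ⟨hij.symm, mem_univ j⟩),
    update_of_ne hij, update_self, update_self, mul_assoc]
  congr 2
  refine prod_congr rfl fun l hl => ?_
  obtain ⟨hlj, hli⟩ : l ≠ j ∧ l ≠ i := by simpa using hl
  rw [update_of_ne hlj, update_of_ne hli]

@[to_additive]
theorem prod_comp_of_forall_eq_or_eq {ι R M : Type*} [DecidableEq R] [CommMonoid M] (s : Finset ι)
    (y : ι → R) (g : R → M) {p q : R} (h : ∀ i ∈ s, y i = p ∨ y i = q) :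
    ∏ i ∈ s, g (y i) = g q ^ #{i ∈ s | y i = q} * g p ^ #{i ∈ s | y i ≠ q} := by
  rw [← prod_filter_mul_prod_filter_not s (fun i => y i = q)]
  congr 1
  · rw [prod_congr rfl fun i hi => by rw [(mem_filter.1 hi).2], prod_const]
  · refine (prod_congr rfl fun i hi => ?_).trans (prod_const _)
    obtain ⟨his, hiq⟩ := mem_filter.1 hi
    rw [(h i his).resolve_right hiq]

theorem sum_eq_card_add_card_mul {ι R : Type*} [Fintype ι] [DecidableEq ι] [NonAssocSemiring R]
    [DecidableEq R] {y : ι → R} {S : Finset ι} {t : R} (hS : ∀ i ∈ S, y i = t)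
    (hSc : ∀ i ∈ Sᶜ, y i = 0 ∨ y i = 1) :
    ∑ i, y i = #{i ∈ Sᶜ | y i = 1} + #S * t := by
  have hSc_sum : ∑ i ∈ Sᶜ, y i = #{i ∈ Sᶜ | y i = 1} := by
    simpa using sum_comp_of_forall_eq_or_eq _ y id hSc
  rw [← sum_add_sum_compl S, hSc_sum, sum_congr rfl hS, sum_const, nsmul_eq_mul, add_comm]

section Algebra

variable {ι R : Type*} [Fintype ι] [DecidableEq ι] [CommRing R]

/-- The paper's `f_{d,r}`. -/
def probExactly (r : ℕ) (x : ι → R) : R :=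
  ∑ K ∈ powersetCard r univ, (∏ j ∈ K, x j) * ∏ j ∈ Kᶜ, (1 - x j)

noncomputable def trialPoly (p : R) : R[X] := C (1 - p) + C p * X

noncomputable def successPoly (x : ι → R) : R[X] := ∏ i, trialPoly (x i)

theorem coeff_successPoly (x : ι → R) (r : ℕ) : (successPoly x).coeff r = probExactly r x := by
  have hterm : ∀ K : Finset ι, (∏ i ∈ K, C (x i) * X) * ∏ i ∈ univ \ K, C (1 - x i)
      = C ((∏ i ∈ K, x i) * ∏ i ∈ Kᶜ, (1 - x i)) * X ^ #K := by
    intro K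
    rw [prod_mul_distrib, prod_const, ← map_prod, ← map_prod, map_mul, compl_eq_univ_sdiff]
    ring
  simp only [successPoly, trialPoly, add_comm (C _), prod_add, hterm, finsetSum_coeff,
    coeff_C_mul_X_pow, probExactly, powersetCard_eq_filter, powerset_univ, sum_filter]
  exact sum_congr rfl fun K _ => by split_ifs <;> simp_all [eq_comm]

theorem probExactly_const (r : ℕ) (p : R) :
    probExactly r (fun _ : ι => p)
      = (Fintype.card ι).choose r * p ^ r * (1 - p) ^ (Fintype.card ι - r) := by
  have hterm : ∀ K ∈ powersetCard r (univ : Finset ι),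
      (∏ _j ∈ K, p) * ∏ _j ∈ Kᶜ, (1 - p) = p ^ r * (1 - p) ^ (Fintype.card ι - r) := by
    intro K hK
    rw [mem_powersetCard_univ] at hK
    rw [prod_const, prod_const, card_compl, hK]
  rw [probExactly, sum_congr rfl hterm, sum_const, card_powersetCard, card_univ, nsmul_eq_mul,
    mul_assoc]

theorem coeff_trialPoly_pow (p : R) (m k : ℕ) :
    (trialPoly p ^ m).coeff k = m.choose k * p ^ k * (1 - p) ^ (m - k) := by
  simpa [successPoly, probExactly_const] using coeff_successPoly (fun _ : Fin m => p) k

@[simp]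
theorem trialPoly_zero : trialPoly (0 : R) = 1 := by
  simp [trialPoly]

@[simp]
theorem trialPoly_one : trialPoly (1 : R) = X := by
  simp [trialPoly]

theorem successPoly_eq_X_pow_mul_trialPoly_pow [DecidableEq R] {y : ι → R} {S : Finset ι} {t : R}
    (hS : ∀ i ∈ S, y i = t) (hSc : ∀ i ∈ Sᶜ, y i = 0 ∨ y i = 1) :
    successPoly y = X ^ #{i ∈ Sᶜ | y i = 1} * trialPoly t ^ #S := by
  rw [successPoly, ← prod_mul_prod_compl S, prod_comp_of_forall_eq_or_eq _ y trialPoly hSc,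
    prod_congr rfl fun i hi => by rw [hS i hi], prod_const, trialPoly_one, trialPoly_zero, one_pow,
    mul_one, mul_comm]

theorem trialPoly_mul_trialPoly (u v : R) :
    trialPoly u * trialPoly v = trialPoly (u + v) + C (u * v) * (1 - X) ^ 2 := by
  simp only [trialPoly, map_sub, map_add, map_mul, map_one]
  ring

theorem exists_probExactly_update_update (y : ι → R) {i j : ι} (hij : i ≠ j) (r : ℕ) :
    ∃ Q : R[X], ∀ u v : R, probExactly r (update (update y i u) j v)
      = (trialPoly (u + v) * Q).coeff r + u * v * ((1 - X) ^ 2 * Q).coeff r := by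
  refine ⟨∏ l ∈ (univ.erase i).erase j, trialPoly (y l), fun u v => ?_⟩
  rw [← coeff_successPoly, successPoly, prod_comp_update_update _ _ hij, trialPoly_mul_trialPoly,
    add_mul, coeff_add, mul_assoc, coeff_C_mul]

end Algebra

/-- `P(Bin(k + n, k / (k + n)) = k)`. -/
noncomputable def binomAtMean (k n : ℕ) : ℝ :=
  (k + n).choose k * ((k : ℝ) / (k + n)) ^ k * ((n : ℝ) / (k + n)) ^ n

theorem binomAtMean_comm (k n : ℕ) : binomAtMean k n = binomAtMean n k := by
  rw [binomAtMean, binomAtMean, add_comm n, Nat.choose_symm_add, add_comm (n : ℝ)]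
  ring

theorem binomAtMean_eq_div (k n : ℕ) :
    binomAtMean k n = ((k + n).choose k * k ^ k * n ^ n : ℕ) / ((k + n) ^ (k + n) : ℕ) := by
  rw [binomAtMean, div_pow, div_pow, pow_add]
  push_cast
  ring

theorem succ_pow_two_mul_add_one_le (m : ℕ) :
    (m + 1) ^ (2 * m + 1) ≤ m ^ m * (m + 2) ^ (m + 1) := by
  rcases Nat.eq_zero_or_pos m with rfl | hm
  · norm_num
  have hA : (0 : ℝ) < (m + 1) ^ 2 := by positivity
  have hbern := one_add_mul_le_pow (a := -1 / ((m : ℝ) + 1) ^ 2)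
    (by rw [neg_div, neg_le_neg_iff, div_le_iff₀ hA]; nlinarith [(by positivity : (0 : ℝ) ≤ m)])
    (m + 1)
  have key : (m : ℝ) * (m + 1) ^ (2 * m + 1) ≤ m * (m ^ m * (m + 2) ^ (m + 1)) := by
    have e1 : (1 + ((m + 1 : ℕ) : ℝ) * (-1 / ((m : ℝ) + 1) ^ 2)) * ((m : ℝ) + 1) ^ (2 * (m + 1))
        = m * (m + 1) ^ (2 * m + 1) := by
      push_cast; field_simp; ring
    have e2 : (1 + -1 / ((m : ℝ) + 1) ^ 2) ^ (m + 1) * ((m : ℝ) + 1) ^ (2 * (m + 1))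
        = m * (m ^ m * (m + 2) ^ (m + 1)) := by
      rw [pow_mul, ← mul_pow, show (1 + -1 / ((m : ℝ) + 1) ^ 2) * (m + 1) ^ 2 = m * (m + 2) by
        field_simp; ring, mul_pow, pow_succ]
      ring
    rw [← e1, ← e2]
    exact mul_le_mul_of_nonneg_right hbern (by positivity)
  exact_mod_cast le_of_mul_le_mul_left key (by exact_mod_cast hm)

theorem succ_pow_mul_pow_le_of_le {n m : ℕ} (h : n ≤ m) :
    (n + 1) ^ n * m ^ m ≤ n ^ n * (m + 1) ^ m := by
  induction m, h using Nat.le_induction with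
  | base => rw [mul_comm]
  | succ m _ ih =>
    refine Nat.le_of_mul_le_mul_right ?_ (Nat.pow_self_pos (n := m))
    calc (n + 1) ^ n * (m + 1) ^ (m + 1) * m ^ m
        = (n + 1) ^ n * m ^ m * (m + 1) ^ (m + 1) := by ring
      _ ≤ n ^ n * (m + 1) ^ m * (m + 1) ^ (m + 1) := Nat.mul_le_mul_right _ ih
      _ = n ^ n * (m + 1) ^ (2 * m + 1) := by ring
      _ ≤ n ^ n * (m ^ m * (m + 2) ^ (m + 1)) :=
        Nat.mul_le_mul_left _ (succ_pow_two_mul_add_one_le m)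
      _ = n ^ n * (m + 1 + 1) ^ (m + 1) * m ^ m := by ring

theorem binomAtMean_succ_right_le (k n : ℕ) : binomAtMean k (n + 1) ≤ binomAtMean k n := by
  rw [binomAtMean_eq_div, binomAtMean_eq_div, ← add_assoc,
    div_le_div_iff₀ (by exact_mod_cast Nat.pow_self_pos) (by exact_mod_cast Nat.pow_self_pos)]
  have hchoose : (k + n + 1).choose k * (n + 1) = (k + n).choose k * (k + n + 1) := by
    have h := Nat.choose_mul_succ_eq (k + n) k
    rw [show k + n + 1 - k = n + 1 by omega] at h
    exact h.symm
  have key := succ_pow_mul_pow_le_of_le (Nat.le_add_left n k)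
  exact_mod_cast calc
    (k + n + 1).choose k * k ^ k * (n + 1) ^ (n + 1) * (k + n) ^ (k + n)
        = (k + n + 1).choose k * (n + 1) * k ^ k * ((n + 1) ^ n * (k + n) ^ (k + n)) := by ring
    _ ≤ (k + n).choose k * (k + n + 1) * k ^ k * (n ^ n * (k + n + 1) ^ (k + n)) := by
        rw [hchoose]; gcongr
    _ = (k + n).choose k * k ^ k * n ^ n * (k + n + 1) ^ (k + n + 1) := by ring

theorem binomAtMean_le_of_le {k n k' n' : ℕ} (hk : k ≤ k') (hn : n ≤ n') :
    binomAtMean k' n' ≤ binomAtMean k n :=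
  calc binomAtMean k' n'
      ≤ binomAtMean k' n := antitone_nat_of_succ_le (binomAtMean_succ_right_le k') hn
    _ = binomAtMean n k' := binomAtMean_comm _ _
    _ ≤ binomAtMean n k := antitone_nat_of_succ_le (binomAtMean_succ_right_le n) hk
    _ = binomAtMean k n := binomAtMean_comm _ _

theorem binomAtMean_sub {r d : ℕ} (h : r ≤ d) :
    binomAtMean r (d - r) = d.choose r * ((r : ℝ) / d) ^ r * (((d - r : ℕ) : ℝ) / d) ^ (d - r) := by
  rw [binomAtMean, ← Nat.cast_add, Nat.add_sub_cancel' h]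

theorem coeff_trialPoly_pow_eq_binomAtMean {m k : ℕ} {t : ℝ} (hk : k ≤ m) (ht : m * t = k) :
    (trialPoly t ^ m).coeff k = binomAtMean k (m - k) := by
  rcases eq_or_ne m 0 with rfl | hm
  · obtain rfl : k = 0 := by omega
    simp [binomAtMean]
  have hm' : (m : ℝ) ≠ 0 := by exact_mod_cast hm
  have hkm : (k : ℝ) + ↑(m - k) = m := by rw [Nat.cast_sub hk]; ring
  have htk : t = k / m := eq_div_of_mul_eq hm' (by rw [mul_comm, ht])
  rw [coeff_trialPoly_pow, binomAtMean, Nat.add_sub_cancel' hk, hkm, Nat.cast_sub hk, htk,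
    one_sub_div hm']

section Hypersimplex

variable {ι : Type*} [Fintype ι]

/-- The paper's `D_{d,r}`, with coordinates indexed by `ι`. -/
def hypersimplex (ι : Type*) [Fintype ι] (r : ℕ) : Set (ι → ℝ) :=
  {x | (∀ i, x i ∈ Set.Icc 0 1) ∧ ∑ i, x i = r}

theorem isCompact_hypersimplex (r : ℕ) : IsCompact (hypersimplex ι r) := by
  have h : hypersimplex ι r = Set.Icc 0 1 ∩ (fun x => ∑ i, x i) ⁻¹' {(r : ℝ)} := by
    ext x
    simp [hypersimplex, Pi.le_def, forall_and]
  rw [h]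
  exact isCompact_Icc.inter_right (isClosed_singleton.preimage (by fun_prop))

theorem le_card_of_mem_hypersimplex {r : ℕ} {x : ι → ℝ} (hx : x ∈ hypersimplex ι r) :
    r ≤ Fintype.card ι := by
  have : (r : ℝ) ≤ Fintype.card ι :=
    calc (r : ℝ) = ∑ i, x i := hx.2.symm
      _ ≤ ∑ _i : ι, (1 : ℝ) := sum_le_sum fun i _ => (hx.1 i).2
      _ = Fintype.card ι := by simp
  exact_mod_cast this

theorem update_update_mem_hypersimplex [DecidableEq ι] {r : ℕ} {y : ι → ℝ}
    (hy : y ∈ hypersimplex ι r) {i j : ι} (hij : i ≠ j) {u v : ℝ} (hu : u ∈ Set.Icc 0 1)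
    (hv : v ∈ Set.Icc 0 1) (huv : u + v = y i + y j) :
    update (update y i u) j v ∈ hypersimplex ι r := by
  refine ⟨fun l => ?_, ?_⟩
  · rcases eq_or_ne l j with rfl | hlj
    · simpa using hv
    rcases eq_or_ne l i with rfl | hli
    · simpa [update_of_ne hlj] using hu
    · simpa [update_of_ne hlj, update_of_ne hli] using hy.1 l
  · have hsum := sum_comp_update_update id y hij (y i) (y j)
    simp only [update_eq_self, id] at hsum
    rw [← hy.2, hsum, ← huv]
    exact sum_comp_update_update id y hij u v

end Hypersimplex

theorem IsCompact.exists_isMinOn_lex {X α β : Type*} [TopologicalSpace X]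
    [LinearOrder α] [TopologicalSpace α] [OrderClosedTopology α]
    [LinearOrder β] [TopologicalSpace β] [OrderClosedTopology β]
    {K : Set X} (hK : IsCompact K) (hne : K.Nonempty) {f : X → α} {g : X → β}
    (hf : Continuous f) (hg : Continuous g) :
    ∃ y ∈ K, IsMinOn f K y ∧ IsMinOn g {z ∈ K | f z = f y} y := by
  obtain ⟨y₀, hy₀K, hy₀⟩ := hK.exists_isMinOn hne hf.continuousOn
  have hL : IsCompact {z ∈ K | f z = f y₀} := hK.inter_right (isClosed_eq hf continuous_const)
  obtain ⟨y, ⟨hyK, hy⟩, hmin⟩ := hL.exists_isMinOn ⟨y₀, hy₀K, rfl⟩ hg.continuousOn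
  exact ⟨y, hyK, fun z hz => hy ▸ hy₀ hz, hy ▸ hmin⟩

theorem continuous_probExactly {ι : Type*} [Fintype ι] [DecidableEq ι] (r : ℕ) :
    Continuous (probExactly (ι := ι) (R := ℝ) r) := by
  unfold probExactly
  fun_prop

section Minimizer

variable {ι : Type*} [Fintype ι] [DecidableEq ι] {r : ℕ} {y : ι → ℝ}

-- Along the segment `u + v = y i + y j`, `probExactly r` is affine in `u * v`; a minimum strictly
-- inside the range of `u * v` forces the slope to vanish.
theorem probExactly_average_eq_of_isMinOn (hy : y ∈ hypersimplex ι r)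
    (hmin : IsMinOn (probExactly r) (hypersimplex ι r) y) {i j : ι} (hi : 0 < y i) (hj : y j < 1)
    (hlt : y i < y j) :
    probExactly r (update (update y i ((y i + y j) / 2)) j ((y i + y j) / 2))
      = probExactly r y := by
  have hij : i ≠ j := fun h => hlt.ne (congrArg y h)
  obtain ⟨Q, hQ⟩ := exists_probExactly_update_update y hij r
  set s := y i + y j
  set b := ((1 - X) ^ 2 * Q).coeff r
  have hQy := hQ (y i) (y j)
  simp only [update_eq_self] at hQy
  have hmove : ∀ u v, u ∈ Set.Icc 0 1 → v ∈ Set.Icc 0 1 → u + v = s →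
      y i * y j * b ≤ u * v * b := by
    intro u v hu hv huv
    have : probExactly r y ≤ probExactly r (update (update y i u) j v) :=
      hmin (update_update_mem_hypersimplex hy hij hu hv huv)
    rw [hQy, hQ, huv] at this
    linarith
  have hmid : s / 2 ∈ Set.Icc (0 : ℝ) 1 := ⟨by linarith, by linarith⟩
  have hb_nonneg : 0 ≤ b := by
    have := hmove (s / 2) (s / 2) hmid hmid (add_halves s)
    nlinarith [sq_pos_of_pos (sub_pos.2 hlt)]
  set ε := min (y i) (1 - y j)
  have hε : 0 < ε := lt_min hi (by linarith)
  have hb_nonpos : b ≤ 0 := by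
    have := hmove (y i - ε) (y j + ε) ⟨by linarith [min_le_left (y i) (1 - y j)], by linarith⟩
      ⟨by linarith, by linarith [min_le_right (y i) (1 - y j)]⟩ (by ring)
    have hprod : (y i - ε) * (y j + ε) < y i * y j := by nlinarith
    nlinarith
  rw [hQ, hQy, add_halves, le_antisymm hb_nonpos hb_nonneg]
  ring

theorem eq_of_isMinOn_probExactly (hy : y ∈ hypersimplex ι r)
    (hmin : IsMinOn (probExactly r) (hypersimplex ι r) y)
    (hsq : IsMinOn (fun z => ∑ i, z i ^ 2)
      {z ∈ hypersimplex ι r | probExactly r z = probExactly r y} y)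
    {i j : ι} (hi : y i ∈ Set.Ioo 0 1) (hj : y j ∈ Set.Ioo 0 1) : y i = y j := by
  suffices h : ∀ {i j}, y i ∈ Set.Ioo 0 1 → y j ∈ Set.Ioo 0 1 → ¬ y i < y j from
    le_antisymm (not_lt.1 (h hj hi)) (not_lt.1 (h hi hj))
  intro i j hi hj hlt
  have hij : i ≠ j := fun h => hlt.ne (congrArg y h)
  set s := y i + y j
  have hmid : s / 2 ∈ Set.Icc (0 : ℝ) 1 := ⟨by linarith [hi.1, hj.1], by linarith [hi.2, hj.2]⟩
  have hsq_le : ∑ l, y l ^ 2 ≤ ∑ l, update (update y i (s / 2)) j (s / 2) l ^ 2 :=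
    hsq ⟨update_update_mem_hypersimplex hy hij hmid hmid (add_halves s),
      probExactly_average_eq_of_isMinOn hy hmin hi.1 hj.2 hlt⟩
  have hy_sq := sum_comp_update_update (· ^ 2) y hij (y i) (y j)
  have hz_sq : ∑ l, update (update y i (s / 2)) j (s / 2) l ^ 2
      = (s / 2) ^ 2 + (s / 2) ^ 2 + ∑ l ∈ (univ.erase i).erase j, y l ^ 2 :=
    sum_comp_update_update (· ^ 2) y hij _ _
  simp only [update_eq_self] at hy_sq
  rw [hy_sq, hz_sq] at hsq_le
  nlinarith [sq_pos_of_pos (sub_pos.2 hlt)]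

theorem binomAtMean_le_probExactly (hy : y ∈ hypersimplex ι r)
    (hconst : ∀ i j, y i ∈ Set.Ioo 0 1 → y j ∈ Set.Ioo 0 1 → y i = y j) :
    binomAtMean r (Fintype.card ι - r) ≤ probExactly r y := by
  classical
  set S : Finset ι := {i | y i ∈ Set.Ioo 0 1}
  obtain ⟨t, ht, hSt⟩ : ∃ t ∈ Set.Icc (0 : ℝ) 1, ∀ i ∈ S, y i = t := by
    rcases S.eq_empty_or_nonempty with hS | ⟨i₀, hi₀⟩
    · exact ⟨0, Set.left_mem_Icc.2 zero_le_one, by simp [hS]⟩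
    · exact ⟨y i₀, Set.Ioo_subset_Icc_self (mem_filter.1 hi₀).2,
        fun i hi => hconst _ _ (mem_filter.1 hi).2 (mem_filter.1 hi₀).2⟩
  have hSc : ∀ i ∈ Sᶜ, y i = 0 ∨ y i = 1 := by
    intro i hi
    have hi' : y i ∉ Set.Ioo 0 1 := by simpa [S] using hi
    rcases (hy.1 i).1.eq_or_lt with h | h
    · exact Or.inl h.symm
    · exact Or.inr ((hy.1 i).2.eq_or_lt.resolve_right fun h' => hi' ⟨h, h'⟩)
  set a := #{i ∈ Sᶜ | y i = 1}
  have hsum : (a : ℝ) + #S * t = r := by rw [← hy.2, sum_eq_card_add_card_mul hSt hSc]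
  have har : a ≤ r := by
    have : (a : ℝ) ≤ r := by nlinarith [ht.1]
    exact_mod_cast this
  have hram : r ≤ a + #S := by
    have : (r : ℝ) ≤ a + #S := by nlinarith [ht.2]
    exact_mod_cast this
  have hcard : a + #S ≤ Fintype.card ι :=
    calc a + #S ≤ #Sᶜ + #S := Nat.add_le_add_right (card_filter_le _ _) _
      _ = Fintype.card ι := card_compl_add_card S
  rw [← coeff_successPoly, successPoly_eq_X_pow_mul_trialPoly_pow hSt hSc, coeff_X_pow_mul',
    if_pos har, coeff_trialPoly_pow_eq_binomAtMean (by omega) (by rw [Nat.cast_sub har]; linarith)]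
  exact binomAtMean_le_of_le (Nat.sub_le r a) (by omega)

end Minimizer

theorem one_sub_div_pow_sub (r d : ℕ) :
    (1 - (r : ℝ) / d) ^ (d - r) = (((d - r : ℕ) : ℝ) / d) ^ (d - r) := by
  by_cases h : r < d
  · rw [Nat.cast_sub h.le, one_sub_div (Nat.cast_ne_zero.2 (by omega))]
  · rw [Nat.sub_eq_zero_of_le (not_lt.1 h), pow_zero, pow_zero]

theorem stmt_8_general (d r : ℕ) :
    (∀ x : Fin d → ℝ, (∀ i, x i ∈ Set.Icc (0 : ℝ) 1) → (∑ i, x i) = (r : ℝ) →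
      (d.choose r : ℝ) * ((r : ℝ) / d) ^ r * (((d - r : ℕ) : ℝ) / d) ^ (d - r) ≤
        ∑ K ∈ Finset.powersetCard r (Finset.univ : Finset (Fin d)),
          (∏ j ∈ K, x j) * ∏ j ∈ Kᶜ, (1 - x j)) ∧
    (∑ K ∈ Finset.powersetCard r (Finset.univ : Finset (Fin d)),
        (∏ _j ∈ K, ((r : ℝ) / d)) * ∏ _j ∈ Kᶜ, (1 - (r : ℝ) / d))
      = (d.choose r : ℝ) * ((r : ℝ) / d) ^ r * (((d - r : ℕ) : ℝ) / d) ^ (d - r) := by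
  refine ⟨fun x hx hsum => ?_, ?_⟩
  · have hxD : x ∈ hypersimplex (Fin d) r := ⟨hx, hsum⟩
    obtain ⟨y, hyD, hmin, hsq⟩ := (isCompact_hypersimplex r).exists_isMinOn_lex ⟨x, hxD⟩
      (continuous_probExactly r) (g := fun z : Fin d → ℝ => ∑ i, z i ^ 2) (by fun_prop)
    have hrd : r ≤ d := by simpa using le_card_of_mem_hypersimplex hxD
    calc _ = binomAtMean r (d - r) := (binomAtMean_sub hrd).symm
      _ ≤ probExactly r y := by
        simpa only [Fintype.card_fin] using binomAtMean_le_probExactly hyD fun i j =>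
          eq_of_isMinOn_probExactly hyD hmin hsq
      _ ≤ probExactly r x := hmin hxD
  · change probExactly r (fun _ : Fin d => (r : ℝ) / d) = _
    rw [probExactly_const, Fintype.card_fin, one_sub_div_pow_sub]

/-- For `0 < r < d`, the function
`f(x) = ∑_{|K| = r} ∏_{j ∈ K} x_j ∏_{j ∉ K} (1 - x_j)` on
`D = {x ∈ [0,1]^d : ∑ x_i = r}` attains its minimum at the constant vector
`(r/d, …, r/d)`, and this minimum equals `C(d,r) (r/d)^r ((d-r)/d)^(d-r)`. -/
theorem stmt_8 (d r : ℕ) (h0 : 0 < r) (hd : r < d) :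
    (∀ x : Fin d → ℝ, (∀ i, x i ∈ Set.Icc (0 : ℝ) 1) → (∑ i, x i) = (r : ℝ) →
      (d.choose r : ℝ) * ((r : ℝ) / d) ^ r * (((d - r : ℕ) : ℝ) / d) ^ (d - r) ≤
        ∑ K ∈ Finset.powersetCard r (Finset.univ : Finset (Fin d)),
          (∏ j ∈ K, x j) * ∏ j ∈ Kᶜ, (1 - x j)) ∧
    (∑ K ∈ Finset.powersetCard r (Finset.univ : Finset (Fin d)),
        (∏ _j ∈ K, ((r : ℝ) / d)) * ∏ _j ∈ Kᶜ, (1 - (r : ℝ) / d))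
      = (d.choose r : ℝ) * ((r : ℝ) / d) ^ r * (((d - r : ℕ) : ℝ) / d) ^ (d - r) :=
  stmt_8_general d r
end

section
/- Let G = (A, B, E) be a d-regular bipartite graph on 2n vertices and let α assign value 1 to each vertex of A and value d−1 to each vertex of B. Then inf over positive (x_u)_{u∈A}, (y_v)_{v∈B} of Π_{(u,v)∈E} (x_u + y_v) / (Π_{u∈A} x_u · Π_{v∈B} y_v^{d-1}) equals d^{nd} / (d-1)^{n(d-1)}. -/
/-!
On an edge `vw` with `v ∈ A`, `w ∈ B`, weighted AM-GM (here: Bernoulli's inequality) gives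
`x_v (x_w / (d-1))^(d-1) ≤ ((x_v + x_w) / d)^d`. Multiplying over all edges, regularity makes
every vertex occur in exactly `d` factors, so the left-hand sides multiply to the `d`-th power of
`∏_A x_v · ∏_B (x_w / (d-1))^(d-1)`; taking `d`-th roots gives the lower bound
`d^(nd) / (d-1)^(n(d-1))` for the ratio. It is attained at `x ≡ 1` on `A`, `x ≡ d - 1` on `B`,
where every edge contributes the factor `d`.
-/
open Finset

theorem mul_div_pow_le_add_div_pow {x y : ℝ} (hx : 0 ≤ x) (hy : 0 ≤ y) (k : ℕ) :
    x * (y / k) ^ k ≤ ((x + y) / (k + 1)) ^ (k + 1) := by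
  rcases Nat.eq_zero_or_pos k with rfl | hk
  · simpa using hy
  rcases hy.eq_or_lt with rfl | hy
  · simp only [zero_div, zero_pow hk.ne', mul_zero]
    positivity
  set m := y / k
  have hm : 0 < m := by positivity
  have hk1 : (0 : ℝ) < k + 1 := by positivity
  -- Bernoulli's inequality `1 + (k + 1) a ≤ (1 + a) ^ (k + 1)` at the `a` with
  -- `m (1 + a) = (x + y) / (k + 1)`
  set a := (x / m - 1) / (k + 1)
  have ha : -2 ≤ a := by
    rw [le_div_iff₀ hk1]
    nlinarith [div_nonneg hx hm.le]
  have hma : m * (1 + a) = (x + y) / (k + 1) := by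
    simp only [a, m]; field_simp; ring
  calc x * m ^ k = m ^ (k + 1) * (1 + (k + 1 : ℕ) * a) := by
        simp only [a]; push_cast; field_simp; ring
    _ ≤ m ^ (k + 1) * (1 + a) ^ (k + 1) := by
        gcongr; exact one_add_mul_le_pow ha _
    _ = ((x + y) / (k + 1)) ^ (k + 1) := by rw [← mul_pow, hma]

namespace SimpleGraph

noncomputable def edgePolynomial {V : Type*} [Fintype V] [DecidableEq V] (R : Type*)
    [CommSemiring R] (G : SimpleGraph V) [DecidableRel G.Adj] : MvPolynomial V R :=
  ∏ e ∈ G.edgeFinset,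
    Sym2.lift ⟨fun u v => MvPolynomial.X u + MvPolynomial.X v, fun _ _ => add_comm _ _⟩ e

variable {V : Type*} {G : SimpleGraph V} [Fintype V] [DecidableRel G.Adj] {s t : Finset V}
  {M : Type*} [CommMonoid M]

theorem IsBipartiteWith.prod_edgeFinset [DecidableEq V] (h : G.IsBipartiteWith s t)
    (f : Sym2 V → M) :
    ∏ e ∈ G.edgeFinset, f e = ∏ v ∈ s, ∏ w ∈ G.neighborFinset v, f s(v, w) := by
  rw [prod_sigma']
  refine (prod_bij (fun p _ => s(p.1, p.2)) ?_ ?_ ?_ fun _ _ => rfl).symm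
  · rintro ⟨v, w⟩ hp
    simpa using (mem_sigma.1 hp).2
  · rintro ⟨v, w⟩ hp ⟨v', w'⟩ hp' heq
    simp only [mem_sigma, mem_neighborFinset] at hp hp'
    rcases Sym2.eq_iff.1 heq with ⟨rfl, rfl⟩ | ⟨rfl, rfl⟩
    · rfl
    · exact (Set.disjoint_left.1 h.disjoint (mem_coe.2 hp.1) (h.mem_of_mem_adj hp'.1 hp'.2)).elim
  · refine Sym2.ind fun v w he => ?_
    rw [mem_edgeFinset, mem_edgeSet] at he
    rcases h.mem_of_adj he with ⟨hv, -⟩ | ⟨-, hw⟩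
    · exact ⟨⟨v, w⟩, mem_sigma.2 ⟨hv, (mem_neighborFinset _ _ _).2 he⟩, rfl⟩
    · exact ⟨⟨w, v⟩, mem_sigma.2 ⟨hw, (mem_neighborFinset _ _ _).2 he.symm⟩, Sym2.eq_swap⟩

theorem IsBipartiteWith.eval_edgePolynomial [DecidableEq V] {R : Type*} [CommSemiring R]
    (h : G.IsBipartiteWith s t) (x : V → R) :
    MvPolynomial.eval x (G.edgePolynomial R) = ∏ v ∈ s, ∏ w ∈ G.neighborFinset v, (x v + x w) := by
  simp [edgePolynomial, h.prod_edgeFinset]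

theorem IsBipartiteWith.prod_prod_neighborFinset_comm (h : G.IsBipartiteWith s t)
    (f : V → V → M) :
    ∏ v ∈ s, ∏ w ∈ G.neighborFinset v, f v w = ∏ w ∈ t, ∏ v ∈ G.neighborFinset w, f v w :=
  prod_comm' fun v w => by
    simp only [mem_neighborFinset, G.adj_comm w v]
    exact ⟨fun ⟨hv, hvw⟩ => ⟨hvw, h.mem_of_mem_adj hv hvw⟩,
      fun ⟨hvw, hw⟩ => ⟨h.mem_of_mem_adj' hw hvw, hvw⟩⟩

theorem IsRegularOfDegree.prod_prod_neighborFinset_eq_pow {d : ℕ} (hG : G.IsRegularOfDegree d)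
    (s : Finset V) (f : V → M) :
    ∏ v ∈ s, ∏ _w ∈ G.neighborFinset v, f v = (∏ v ∈ s, f v) ^ d := by
  simp only [prod_const, card_neighborFinset_eq_degree, hG.degree_eq, prod_pow]

theorem IsBipartiteWith.prod_mul_prod_div_pow_le (h : G.IsBipartiteWith s t) {k : ℕ}
    (hG : G.IsRegularOfDegree (k + 1)) {x : V → ℝ} (hx : ∀ v, 0 ≤ x v) :
    (∏ v ∈ s, x v) * ∏ w ∈ t, (x w / k) ^ k ≤
      ∏ v ∈ s, ∏ w ∈ G.neighborFinset v, (x v + x w) / (k + 1) := by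
  have hx' : ∀ v, 0 ≤ x v / k := fun v => div_nonneg (hx v) k.cast_nonneg
  refine (pow_le_pow_iff_left₀ (mul_nonneg (prod_nonneg fun v _ => hx v)
    (prod_nonneg fun w _ => pow_nonneg (hx' w) k)) (prod_nonneg fun v _ => prod_nonneg fun w _ =>
    div_nonneg (add_nonneg (hx v) (hx w)) (by positivity)) k.succ_ne_zero).1 ?_
  calc ((∏ v ∈ s, x v) * ∏ w ∈ t, (x w / k) ^ k) ^ (k + 1)
      = ∏ v ∈ s, ∏ w ∈ G.neighborFinset v, x v * (x w / k) ^ k := by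
        rw [mul_pow, ← hG.prod_prod_neighborFinset_eq_pow, ← hG.prod_prod_neighborFinset_eq_pow,
          ← h.prod_prod_neighborFinset_comm, ← prod_mul_distrib]
        exact prod_congr rfl fun v _ => prod_mul_distrib.symm
    _ ≤ ∏ v ∈ s, ∏ w ∈ G.neighborFinset v, ((x v + x w) / (k + 1)) ^ (k + 1) :=
        prod_le_prod (fun v _ => prod_nonneg fun w _ => mul_nonneg (hx v) (pow_nonneg (hx' w) k))
          fun v _ => prod_le_prod (fun w _ => mul_nonneg (hx v) (pow_nonneg (hx' w) k))
            fun w _ => mul_div_pow_le_add_div_pow (hx v) (hx w) k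
    _ = (∏ v ∈ s, ∏ w ∈ G.neighborFinset v, (x v + x w) / (k + 1)) ^ (k + 1) := by
        simp only [prod_pow]

theorem IsBipartiteWith.mul_prod_mul_prod_pow_le (h : G.IsBipartiteWith s t) {k : ℕ}
    (hG : G.IsRegularOfDegree (k + 1)) {x : V → ℝ} (hx : ∀ v, 0 ≤ x v) :
    ((k + 1 : ℝ) ^ (#s * (k + 1)) / (k : ℝ) ^ (#t * k)) * ((∏ v ∈ s, x v) * ∏ w ∈ t, x w ^ k) ≤
      ∏ v ∈ s, ∏ w ∈ G.neighborFinset v, (x v + x w) := by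
  have key := h.prod_mul_prod_div_pow_le hG hx
  simp only [div_pow, prod_div_distrib] at key
  rw [hG.prod_prod_neighborFinset_eq_pow, prod_const, prod_const, ← pow_mul, ← pow_mul,
    mul_comm k, le_div_iff₀ (by positivity)] at key
  exact (le_of_eq (by ring)).trans key

theorem IsBipartiteWith.iInf_prod_prod_add_div_eq (h : G.IsBipartiteWith s t) {k : ℕ}
    (hG : G.IsRegularOfDegree (k + 1)) (hk : 0 < k) :
    ⨅ x : {x : V → ℝ // ∀ v, 0 < x v}, (∏ v ∈ s, ∏ w ∈ G.neighborFinset v, (x.1 v + x.1 w)) /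
        ((∏ v ∈ s, x.1 v) * ∏ w ∈ t, x.1 w ^ k) =
      (k + 1 : ℝ) ^ (#s * (k + 1)) / (k : ℝ) ^ (#t * k) := by
  classical
  have hlb : ∀ x : {x : V → ℝ // ∀ v, 0 < x v},
      (k + 1 : ℝ) ^ (#s * (k + 1)) / (k : ℝ) ^ (#t * k) ≤
        (∏ v ∈ s, ∏ w ∈ G.neighborFinset v, (x.1 v + x.1 w)) /
          ((∏ v ∈ s, x.1 v) * ∏ w ∈ t, x.1 w ^ k) := fun x => by
    rw [le_div_iff₀ (mul_pos (prod_pos fun v _ => x.2 v) (prod_pos fun w _ => pow_pos (x.2 w) k))]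
    exact h.mul_prod_mul_prod_pow_le hG fun v => (x.2 v).le
  let x₀ : {x : V → ℝ // ∀ v, 0 < x v} :=
    ⟨fun v => if v ∈ s then 1 else k, fun v => by by_cases hv : v ∈ s <;> simp [hv, hk]⟩
  have hnum : ∏ v ∈ s, ∏ w ∈ G.neighborFinset v, (x₀.1 v + x₀.1 w) =
      ∏ v ∈ s, ∏ _w ∈ G.neighborFinset v, (k + 1 : ℝ) := by
    refine prod_congr rfl fun v hv => prod_congr rfl fun w hw => ?_
    have hwt : w ∈ t := h.mem_of_mem_adj (mem_coe.2 hv) ((mem_neighborFinset _ _ _).1 hw)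
    have hws : w ∉ s := fun hws => Set.disjoint_left.1 h.disjoint (mem_coe.2 hws) hwt
    simp only [x₀, if_pos hv, if_neg hws]
    ring
  have hden : ∏ w ∈ t, x₀.1 w ^ k = ∏ _w ∈ t, (k : ℝ) ^ k := by
    refine prod_congr rfl fun w hw => ?_
    have hws : w ∉ s := fun hws => Set.disjoint_left.1 h.disjoint (mem_coe.2 hws) hw
    simp only [x₀, if_neg hws]
  have hx₀ : (∏ v ∈ s, ∏ w ∈ G.neighborFinset v, (x₀.1 v + x₀.1 w)) /
      ((∏ v ∈ s, x₀.1 v) * ∏ w ∈ t, x₀.1 w ^ k) =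
        (k + 1 : ℝ) ^ (#s * (k + 1)) / (k : ℝ) ^ (#t * k) := by
    rw [hnum, hden, hG.prod_prod_neighborFinset_eq_pow, prod_const, prod_const,
      prod_eq_one fun v hv => if_pos hv, one_mul, ← pow_mul, ← pow_mul, mul_comm k]
  have : Nonempty {x : V → ℝ // ∀ v, 0 < x v} := ⟨x₀⟩
  exact le_antisymm ((ciInf_le ⟨_, Set.forall_mem_range.2 hlb⟩ x₀).trans_eq hx₀) (le_ciInf hlb)

end SimpleGraph

/-- For a `d`-regular bipartite graph `G = (A, B, E)` on `2n` vertices, the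
capacity of `P_G` with respect to the vector taking value `1` on `A` and
`d - 1` on `B` equals `d^{nd} / (d-1)^{n(d-1)}`. -/
theorem stmt_15 {V : Type*} [Fintype V] [DecidableEq V]
    (G : SimpleGraph V) [DecidableRel G.Adj]
    (A B : Finset V) (n d : ℕ)
    (hpart : ∀ v, v ∈ A ↔ v ∉ B)
    (hA : A.card = n) (hB : B.card = n)
    (hd : 2 ≤ d)
    (hreg : ∀ v, G.degree v = d)
    (hbip : ∀ u v, G.Adj u v → (u ∈ A ↔ v ∈ B)) :
    (⨅ x : {x : V → ℝ // ∀ v, 0 < x v},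
      MvPolynomial.eval x.1
        (∏ e ∈ G.edgeFinset,
          Sym2.lift ⟨fun u v => MvPolynomial.X u + MvPolynomial.X v,
            fun u v => add_comm _ _⟩ e : MvPolynomial V ℝ) /
        ((∏ u ∈ A, x.1 u) * ∏ v ∈ B, (x.1 v) ^ (d - 1)))
      = (d : ℝ) ^ (n * d) / ((d - 1 : ℕ) : ℝ) ^ (n * (d - 1)) := by
  obtain ⟨k, rfl⟩ : ∃ k, d = k + 1 := ⟨d - 1, by omega⟩
  have hAB : G.IsBipartiteWith A B := by
    refine ⟨Set.disjoint_left.2 fun v hvA hvB => (hpart v).1 hvA hvB, fun v w hvw => ?_⟩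
    by_cases hv : v ∈ A
    · exact .inl ⟨hv, (hbip v w hvw).1 hv⟩
    · exact .inr ⟨not_not.1 (mt (hpart v).2 hv), (hpart w).2 (mt (hbip v w hvw).2 hv)⟩
  have hinf := hAB.iInf_prod_prod_add_div_eq hreg (by omega)
  rw [hA, hB] at hinf
  change ⨅ x : {x : V → ℝ // ∀ v, 0 < x v}, MvPolynomial.eval x.1 (G.edgePolynomial ℝ) / _ = _
  simp only [hAB.eval_edgePolynomial, Nat.add_sub_cancel]
  exact_mod_cast hinf
end

section
/- Let G be a finite graph with all vertex degrees even, and let α_v = d_v/2 where d_v is the degree of v. Then the α-capacity of P_G(x) = Π_{(u,v)∈E}(x_u + x_v), i.e., inf_{x > 0} Π_{(u,v)∈E}(x_u + x_v) / Π_v x_v^{d_v/2}, equals 2^{|E(G)|}. -/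
/-!
On each edge, `(x_u + x_v)² ≥ 4 x_u x_v`. Multiplying over the edges, each vertex `v` occurs in
exactly `d_v` of the products `x_u x_v`, so the square of the numerator is at least
`4^|E| ∏_v x_v^{d_v}`, which is the square of `2^|E| ∏_v x_v^{d_v/2}` since every `d_v` is even.
Equality holds at `x = 1`.
-/

open Finset

namespace SimpleGraph

variable {V : Type*} [Fintype V] [DecidableEq V] (G : SimpleGraph V) [DecidableRel G.Adj]

theorem prod_darts_fst {M : Type*} [CommMonoid M] (x : V → M) :
    ∏ d : G.Dart, x d.fst = ∏ v, x v ^ G.degree v := by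
  rw [← prod_fiberwise univ (fun d : G.Dart => d.fst)]
  refine prod_congr rfl fun v _ => ?_
  rw [prod_congr rfl fun d hd => congrArg x (mem_filter.1 hd).2, prod_const,
    dart_fst_fiber_card_eq_degree]

theorem prod_darts_fst_eq_prod_edgeFinset {M : Type*} [CommMonoid M] (x : V → M) :
    ∏ d : G.Dart, x d.fst =
      ∏ e ∈ G.edgeFinset, Sym2.lift ⟨fun u v => x u * x v, fun _ _ => mul_comm _ _⟩ e := by
  rw [← prod_fiberwise_of_maps_to (t := G.edgeFinset) (g := Dart.edge)
      fun d _ => mem_edgeFinset.2 d.edge_mem]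
  refine prod_congr rfl fun e he => ?_
  induction e with
  | _ u v =>
    let d : G.Dart := ⟨(u, v), mem_edgeFinset.1 he⟩
    rw [show s(u, v) = d.edge from rfl, d.edge_fiber, prod_pair d.symm_ne.symm]
    rfl

theorem prod_edgeFinset_mul_eq_prod_pow_degree {M : Type*} [CommMonoid M] (x : V → M) :
    ∏ e ∈ G.edgeFinset, Sym2.lift ⟨fun u v => x u * x v, fun _ _ => mul_comm _ _⟩ e =
      ∏ v, x v ^ G.degree v := by
  rw [← prod_darts_fst_eq_prod_edgeFinset, prod_darts_fst]

theorem two_pow_mul_prod_le_prod_add {R : Type*} [CommRing R] [LinearOrder R]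
    [IsStrictOrderedRing R] (heven : ∀ v, Even (G.degree v)) {x : V → R} (hx : ∀ v, 0 ≤ x v) :
    2 ^ #G.edgeFinset * ∏ v, x v ^ (G.degree v / 2) ≤
      ∏ e ∈ G.edgeFinset, Sym2.lift ⟨fun u v => x u + x v, fun _ _ => add_comm _ _⟩ e := by
  set add : Sym2 V → R := Sym2.lift ⟨fun u v => x u + x v, fun _ _ => add_comm _ _⟩
  set mul : Sym2 V → R := Sym2.lift ⟨fun u v => x u * x v, fun _ _ => mul_comm _ _⟩
  have hedge : ∀ e, 0 ≤ add e ∧ 0 ≤ mul e ∧ 4 * mul e ≤ add e ^ 2 := fun e => by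
    induction e with
    | _ u v =>
      exact ⟨add_nonneg (hx u) (hx v), mul_nonneg (hx u) (hx v),
        (mul_assoc _ _ _).symm.trans_le (four_mul_le_sq_add _ _)⟩
  refine le_of_pow_le_pow_left₀ two_ne_zero (prod_nonneg fun e _ => (hedge e).1) ?_
  calc (2 ^ #G.edgeFinset * ∏ v, x v ^ (G.degree v / 2)) ^ 2
      = 4 ^ #G.edgeFinset * ∏ v, x v ^ G.degree v := by
        rw [mul_pow, ← prod_pow]
        congr 1
        · rw [← pow_mul, mul_comm, pow_mul]
          norm_num
        · refine prod_congr rfl fun v _ => ?_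
          rw [← pow_mul, Nat.div_mul_cancel (heven v).two_dvd]
    _ = ∏ e ∈ G.edgeFinset, 4 * mul e := by
        rw [prod_mul_distrib, prod_const, prod_edgeFinset_mul_eq_prod_pow_degree]
    _ ≤ ∏ e ∈ G.edgeFinset, add e ^ 2 :=
        prod_le_prod (fun e _ => mul_nonneg zero_le_four (hedge e).2.1) fun e _ => (hedge e).2.2
    _ = (∏ e ∈ G.edgeFinset, add e) ^ 2 := prod_pow _ _ _

end SimpleGraph

theorem MvPolynomial.eval_sym2Lift_X_add_X {σ R : Type*} [CommSemiring R] (x : σ → R)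
    (e : Sym2 σ) :
    eval x (Sym2.lift ⟨fun u v => X u + X v, fun _ _ => add_comm _ _⟩ e) =
      Sym2.lift ⟨fun u v => x u + x v, fun _ _ => add_comm _ _⟩ e := by
  induction e with
  | _ u v => simp

/-- For a finite graph `G` with all degrees even, the capacity of
`P_G(x) = ∏_{(u,v) ∈ E} (x_u + x_v)` with respect to `α_v = d_v / 2`
equals `2^{|E(G)|}`. -/
theorem stmt_16 {V : Type*} [Fintype V] [DecidableEq V]
    (G : SimpleGraph V) [DecidableRel G.Adj]
    (heven : ∀ v, Even (G.degree v)) :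
    (⨅ x : {x : V → ℝ // ∀ v, 0 < x v},
      MvPolynomial.eval x.1
        (∏ e ∈ G.edgeFinset,
          Sym2.lift ⟨fun u v => MvPolynomial.X u + MvPolynomial.X v,
            fun u v => add_comm _ _⟩ e : MvPolynomial V ℝ) /
        ∏ v, (x.1 v) ^ (G.degree v / 2))
      = 2 ^ G.edgeFinset.card := by
  simp only [map_prod, MvPolynomial.eval_sym2Lift_X_add_X]
  have hbound : ∀ x : {x : V → ℝ // ∀ v, 0 < x v}, (2 : ℝ) ^ #G.edgeFinset ≤
      (∏ e ∈ G.edgeFinset, Sym2.lift ⟨fun u v => x.1 u + x.1 v, fun _ _ => add_comm _ _⟩ e) /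
        ∏ v, x.1 v ^ (G.degree v / 2) := fun ⟨x, hx⟩ => by
    rw [le_div_iff₀ (prod_pos fun v _ => pow_pos (hx v) _)]
    exact G.two_pow_mul_prod_le_prod_add heven fun v => (hx v).le
  let one : {x : V → ℝ // ∀ v, 0 < x v} := ⟨1, fun _ => one_pos⟩
  have : Nonempty {x : V → ℝ // ∀ v, 0 < x v} := ⟨one⟩
  refine le_antisymm ((ciInf_le ⟨_, Set.forall_mem_range.2 hbound⟩ one).trans_eq ?_)
    (le_ciInf hbound)
  have hedge_one : ∀ e : Sym2 V,
      Sym2.lift ⟨fun u v => one.1 u + one.1 v, fun _ _ => add_comm _ _⟩ e = 2 := fun e => by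
    induction e with
    | _ u v => norm_num [one]
  rw [prod_congr rfl fun e _ => hedge_one e, prod_const]
  simp [one]
end
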